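/- Let p1, r1 : ℝ → ℝ be three times continuously differentiable and nonvanishing, and set p2 = −p1 r1. Define A0 = 2(p1')³/p1³ + 3 p2 (p1')³/(p1⁴ r1) + (p1')² p2'/(p1² p2) + p2'(r1')²/(p2 r1²) + 2(r1')³/r1³ − 3 p1' p1''/p1² − 4 p2 p1' p1''/(p1³ r1) − p1'' p2'/(p1 p2) − r1'' p2'/(r1 p2) − 3 r1' r1''/r1² + p1'''/p1 + p2 p1'''/(p1² r1) + r1'''/r1, and A1 = −2(p1')²/p1² − 3 p2 (p1')²/(p1³ r1) − p1' p2'/(p1 p2) − r1' p2'/(r1 p2) − 2(r1')²/r1² + 2 p1''/p1 + 2 p2 p1''/(p1² r1) + 2 r1''/r1. Then A0(t) = (1/2) A1'(t) for all t; in particular, if A1 vanishes identically then A0 vanishes identically. -/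

import Mathlib

/-!
Substituting `p₂ = -p₁ r₁` gives `p₂'/p₂ = p₁'/p₁ + r₁'/r₁`, and the coefficient `p₂/(p₁ r₁) = -1`
makes all `p₁'''` terms cancel. What remains of `A₁` is
`2 r₁''/r₁ - 3 (r₁'/r₁)² - 2 p₁' r₁'/(p₁ r₁)`, and differentiating this reduced form with the
quotient rule gives exactly twice the reduced form of `A₀`.
-/

noncomputable section

/-- `A₁` after the substitution `p₂ = -p₁ r₁`. -/
def reducedA1 (p r : ℝ → ℝ) (t : ℝ) : ℝ :=
  2 * deriv (deriv r) t / r t - 3 * deriv r t ^ 2 / r t ^ 2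
    - 2 * deriv p t * deriv r t / (p t * r t)

/-- `A₀` after the substitution `p₂ = -p₁ r₁`. -/
def reducedA0 (p r : ℝ → ℝ) (t : ℝ) : ℝ :=
  deriv (deriv (deriv r)) t / r t - 4 * deriv r t * deriv (deriv r) t / r t ^ 2
    + 3 * deriv r t ^ 3 / r t ^ 3
    - (deriv (deriv p) t * deriv r t + deriv p t * deriv (deriv r) t) / (p t * r t)
    + deriv p t ^ 2 * deriv r t / (p t ^ 2 * r t) + deriv p t * deriv r t ^ 2 / (p t * r t ^ 2)

theorem hasDerivAt_reducedA1 {p r : ℝ → ℝ} {t : ℝ}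
    (hp : DifferentiableAt ℝ p t) (hp' : DifferentiableAt ℝ (deriv p) t)
    (hr : DifferentiableAt ℝ r t) (hr' : DifferentiableAt ℝ (deriv r) t)
    (hr'' : DifferentiableAt ℝ (deriv (deriv r)) t) (hp0 : p t ≠ 0) (hr0 : r t ≠ 0) :
    HasDerivAt (reducedA1 p r) (2 * reducedA0 p r t) t := by
  have hquot := (((hr''.hasDerivAt.const_mul 2).div hr.hasDerivAt hr0).sub
      (((hr'.hasDerivAt.pow 2).const_mul 3).div (hr.hasDerivAt.pow 2) (pow_ne_zero 2 hr0))).sub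
    (((hp'.hasDerivAt.const_mul 2).mul hr'.hasDerivAt).div (hp.hasDerivAt.mul hr.hasDerivAt)
      (mul_ne_zero hp0 hr0))
  refine hquot.congr_deriv ?_
  simp only [reducedA0, Pi.mul_apply, Pi.pow_apply]
  field_simp
  ring

theorem A0_is_half_derivative_of_A1
    (p1 r1 : ℝ → ℝ)
    (hp1 : ContDiff ℝ 3 p1) (hr1 : ContDiff ℝ 3 r1)
    (hp1ne : ∀ t : ℝ, p1 t ≠ 0) (hr1ne : ∀ t : ℝ, r1 t ≠ 0)
    (p2 : ℝ → ℝ) (hp2 : ∀ t : ℝ, p2 t = -(p1 t * r1 t))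
    (A0 A1 : ℝ → ℝ)
    (hA0 : ∀ t : ℝ, A0 t =
      2 * (deriv p1 t)^3 / (p1 t)^3
      + 3 * p2 t * (deriv p1 t)^3 / ((p1 t)^4 * r1 t)
      + (deriv p1 t)^2 * deriv p2 t / ((p1 t)^2 * p2 t)
      + deriv p2 t * (deriv r1 t)^2 / (p2 t * (r1 t)^2)
      + 2 * (deriv r1 t)^3 / (r1 t)^3
      - 3 * deriv p1 t * deriv (deriv p1) t / (p1 t)^2
      - 4 * p2 t * deriv p1 t * deriv (deriv p1) t / ((p1 t)^3 * r1 t)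
      - deriv (deriv p1) t * deriv p2 t / (p1 t * p2 t)
      - deriv (deriv r1) t * deriv p2 t / (r1 t * p2 t)
      - 3 * deriv r1 t * deriv (deriv r1) t / (r1 t)^2
      + deriv (deriv (deriv p1)) t / p1 t
      + p2 t * deriv (deriv (deriv p1)) t / ((p1 t)^2 * r1 t)
      + deriv (deriv (deriv r1)) t / r1 t)
    (hA1 : ∀ t : ℝ, A1 t =
      -2 * (deriv p1 t)^2 / (p1 t)^2
      - 3 * p2 t * (deriv p1 t)^2 / ((p1 t)^3 * r1 t)
      - deriv p1 t * deriv p2 t / (p1 t * p2 t)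
      - deriv r1 t * deriv p2 t / (r1 t * p2 t)
      - 2 * (deriv r1 t)^2 / (r1 t)^2
      + 2 * deriv (deriv p1) t / p1 t
      + 2 * p2 t * deriv (deriv p1) t / ((p1 t)^2 * r1 t)
      + 2 * deriv (deriv r1) t / r1 t) :
    (∀ t : ℝ, A0 t = (1/2) * deriv A1 t)
    ∧ ((∀ t : ℝ, A1 t = 0) → ∀ t : ℝ, A0 t = 0) := by
  have hp1d : Differentiable ℝ p1 := hp1.differentiable (by norm_num)
  have hr1d : Differentiable ℝ r1 := hr1.differentiable (by norm_num)
  have hdp2 (t : ℝ) : deriv p2 t = -(deriv p1 t * r1 t + p1 t * deriv r1 t) := by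
    rw [funext hp2]
    exact ((hp1d t).hasDerivAt.mul (hr1d t).hasDerivAt).neg.deriv
  have hA1_eq : A1 = reducedA1 p1 r1 := by
    funext t
    have := hp1ne t; have := hr1ne t
    rw [hA1 t, hdp2 t, hp2 t, reducedA1]
    field_simp
    ring
  have hA0_eq (t : ℝ) : A0 t = reducedA0 p1 r1 t := by
    have := hp1ne t; have := hr1ne t
    rw [hA0 t, hdp2 t, hp2 t, reducedA0]
    field_simp
    ring
  have hA0_half (t : ℝ) : A0 t = (1/2) * deriv A1 t := by
    rw [hA0_eq t, hA1_eq, (hasDerivAt_reducedA1 (hp1d t)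
      ((hp1.of_le (by norm_num)).differentiable_deriv_two t) (hr1d t)
      ((hr1.of_le (by norm_num)).differentiable_deriv_two t)
      ((hr1.deriv' (n := 2)).differentiable_deriv_two t) (hp1ne t) (hr1ne t)).deriv]
    ring
  refine ⟨hA0_half, fun hA1_zero t => ?_⟩
  rw [hA0_half t, funext hA1_zero, deriv_const, mul_zero]
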